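/- Serial-concatenation corollary of LDCP: Let δ be a finite database of C-sequences and k ∈ ℕ. For all L-sequences L and L'' with |L| + |L''| ≤ k, the serial concatenation L ⊕ L'' (the list concatenation of L followed by L'') satisfies LWU_k(L ⊕ L'') ≤ LWU_k(L) and LWU_k(L ⊕ L'') ≤ LWU_k(L''). -/

import Mathlib

open scoped Classical

variable {α : Type*}

/-- C-eventset containment: `(c, λ) ⊑ (c', λ')` iff `c ⊆ c'` and `λ = λ'`. -/
def EsetSub (σ τ : Finset α × ℕ) : Prop := σ.1 ⊆ τ.1 ∧ σ.2 = τ.2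

/-- C-sequence containment: `C ⊑ C'` iff there are strictly increasing indices
`j_1 < … < j_n` into `C'` with `σ_k ⊑ σ'_{j_k}` for all `k`. -/
def CSub (C C' : List (Finset α × ℕ)) : Prop :=
  ∃ D : List (Finset α × ℕ), D.Sublist C' ∧ List.Forall₂ EsetSub C D

/-- `C ∼ L` : the C-sequence `C` matches the L-sequence `L`. -/
def Matches (C : List (Finset α × ℕ)) (L : List (Finset α)) : Prop :=
  C.map Prod.fst = L

/-- `L` is a sub-L-sequence of `L'`. -/
def LSub (L L' : List (Finset α)) : Prop :=
  ∃ M : List (Finset α), M.Sublist L' ∧ List.Forall₂ (fun a b => a ⊆ b) L M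

/-- Utility of a C-eventset: `u_e (c, λ) = λ · Σ_{l ∈ c} p l`. -/
noncomputable def ue (p : α → ℝ) (σ : Finset α × ℕ) : ℝ := (σ.2 : ℝ) * ∑ l ∈ σ.1, p l

/-- Utility of a C-sequence: sum of the utilities of its C-eventsets. -/
noncomputable def us (p : α → ℝ) (C : List (Finset α × ℕ)) : ℝ := (C.map (ue p)).sum

/-- `u_maxk (C, k)`: the maximum utility of at most `k` C-eventsets in `C`. -/
noncomputable def umaxk (p : α → ℝ) (C : List (Finset α × ℕ)) (k : ℕ) : ℝ :=
  sSup { x : ℝ | ∃ C'', CSub C'' C ∧ C''.length ≤ k ∧ x = us p C'' }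

/-- `LWU_k(L)`: the L-sequence-weighted utilization of `L` w.r.t. maximum length `k`. -/
noncomputable def LWU (p : α → ℝ) (δ : Finset (List (Finset α × ℕ))) (k : ℕ)
    (L : List (Finset α)) : ℝ :=
  ∑ C ∈ δ, if ∃ C', CSub C' C ∧ Matches C' L then umaxk p C k else 0

/-- `u_max(L)`: the maximum utility of the L-sequence `L` in the database `δ`. -/
noncomputable def umax (p : α → ℝ) (δ : Finset (List (Finset α × ℕ)))
    (L : List (Finset α)) : ℝ :=
  ∑ C ∈ δ, sSup ({ x : ℝ | ∃ C', CSub C' C ∧ Matches C' L ∧ x = us p C' } ∪ {0})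

/-!
An occurrence of `L ⊕ L''` in a C-sequence splits into a prefix matching `L` and a suffix
matching `L''`, so every C-sequence of `δ` counted by `LWU_k(L ⊕ L'')` is also counted by
`LWU_k(L)` and by `LWU_k(L'')`, with the same weight `u_maxk(C, k)`; the remaining summands
compare `0` with `u_maxk(C, k) ≥ 0`.
-/

lemma ue_nonneg {p : α → ℝ} (hp : ∀ l, 0 ≤ p l) (σ : Finset α × ℕ) : 0 ≤ ue p σ :=
  mul_nonneg (Nat.cast_nonneg _) (Finset.sum_nonneg fun l _ => hp l)

lemma us_nonneg {p : α → ℝ} (hp : ∀ l, 0 ≤ p l) (C : List (Finset α × ℕ)) : 0 ≤ us p C :=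
  List.sum_nonneg fun _ hx => by
    obtain ⟨σ, -, rfl⟩ := List.mem_map.mp hx
    exact ue_nonneg hp σ

lemma umaxk_nonneg {p : α → ℝ} (hp : ∀ l, 0 ≤ p l) (C : List (Finset α × ℕ)) (k : ℕ) :
    0 ≤ umaxk p C k :=
  Real.sSup_nonneg fun _ ⟨C'', _, _, hx⟩ => hx ▸ us_nonneg hp C''

namespace CSub

variable {C' C : List (Finset α × ℕ)}

lemma take (h : CSub C' C) (n : ℕ) : CSub (C'.take n) C :=
  let ⟨D, hD, hf⟩ := h
  ⟨D.take n, (D.take_sublist n).trans hD, List.forall₂_take n hf⟩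

lemma drop (h : CSub C' C) (n : ℕ) : CSub (C'.drop n) C :=
  let ⟨D, hD, hf⟩ := h
  ⟨D.drop n, (D.drop_sublist n).trans hD, List.forall₂_drop n hf⟩

end CSub

namespace Matches

variable {C : List (Finset α × ℕ)} {L L'' : List (Finset α)}

lemma take_length_of_append (h : Matches C (L ++ L'')) : Matches (C.take L.length) L := by
  rw [Matches, List.map_take, h, List.take_left]

lemma drop_length_of_append (h : Matches C (L ++ L'')) : Matches (C.drop L.length) L'' := by
  rw [Matches, List.map_drop, h, List.drop_left]

end Matches

lemma LWU_le_LWU_of_forall_imp {p : α → ℝ} (hp : ∀ l, 0 ≤ p l)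
    (δ : Finset (List (Finset α × ℕ))) (k : ℕ) {L L' : List (Finset α)}
    (h : ∀ C, (∃ C', CSub C' C ∧ Matches C' L) → ∃ C', CSub C' C ∧ Matches C' L') :
    LWU p δ k L ≤ LWU p δ k L' :=
  Finset.sum_le_sum fun C _ => by
    split_ifs with hL hL'
    · exact le_rfl
    · exact absurd (h C hL) hL'
    · exact umaxk_nonneg hp C k
    · exact le_rfl

theorem ldcp_serial_concat_general (p : α → ℝ) (hp : ∀ l, 0 ≤ p l)
    (δ : Finset (List (Finset α × ℕ))) (k : ℕ)
    (L L'' : List (Finset α)) :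
    LWU p δ k (L ++ L'') ≤ LWU p δ k L ∧ LWU p δ k (L ++ L'') ≤ LWU p δ k L'' :=
  ⟨LWU_le_LWU_of_forall_imp hp δ k fun _ ⟨_, hsub, hm⟩ =>
      ⟨_, hsub.take L.length, hm.take_length_of_append⟩,
    LWU_le_LWU_of_forall_imp hp δ k fun _ ⟨_, hsub, hm⟩ =>
      ⟨_, hsub.drop L.length, hm.drop_length_of_append⟩⟩

/-- Serial-concatenation corollary of LDCP: if `|L| + |L''| ≤ k` then
`LWU_k(L ⊕ L'') ≤ LWU_k(L)` and `LWU_k(L ⊕ L'') ≤ LWU_k(L'')`. -/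
theorem ldcp_serial_concat (p : α → ℝ) (hp : ∀ l, 0 ≤ p l)
    (δ : Finset (List (Finset α × ℕ))) (k : ℕ)
    (L L'' : List (Finset α)) (hlen : L.length + L''.length ≤ k) :
    LWU p δ k (L ++ L'') ≤ LWU p δ k L ∧ LWU p δ k (L ++ L'') ≤ LWU p δ k L'' :=
  ldcp_serial_concat_general p hp δ k L L''
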